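/- Let u ∈ C⁴([0,1]) and let φ be a smooth function with compact support in (0,1). Then ∫₀¹ [ 2 u''(x) φ''(x)/(1+u'(x)²)^{5/2} − 5 u''(x)² u'(x) φ'(x)/(1+u'(x)²)^{7/2} ] dx = ∫₀¹ 2 [ (1/√(1+u'(x)²)) · d/dx( κ_u'(x)/√(1+u'(x)²) ) + (1/2) κ_u(x)³ ] φ(x) dx, where κ_u(x) = u''(x)/(1+u'(x)²)^{3/2}. -/

import Mathlib

open Real MeasureTheory

/-- The curvature of the graph `(x, u x)`. -/
noncomputable def curv (u : ℝ → ℝ) (x : ℝ) : ℝ :=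
  iteratedDeriv 2 u x / (1 + deriv u x ^ 2) ^ ((3:ℝ)/2)

lemma pow_half_eq (a : ℝ) (ha : 0 ≤ a) (n : ℕ) : a ^ ((n:ℝ)/2) = Real.sqrt a ^ n := by
  rw [Real.sqrt_eq_rpow, ← Real.rpow_natCast (a ^ ((1:ℝ)/2)) n, ← Real.rpow_mul ha]
  congr 1; ring

lemma key_alg (p s r q t : ℝ) (ht : t^2 = 1+p^2) (ht0 : t ≠ 0) :
    (2*q*t^4 - 30*p*s*r*t^2 - 10*s^3*t^2 + 70*p^2*s^3)/t^9
      + ((10*p*s*r+5*s^3)*t^2 - 35*p^2*s^3)/t^9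
    = 2*((1/t)*((q*t^4 - 10*p*s*r*t^2 - 3*s^3*t^2 + 18*p^2*s^3)/t^8) + (1/2)*(s/t^3)^3) := by
  field_simp
  ring_nf
  linear_combination (s^3 : ℝ) * ht

section hda
variable {p s r q w : ℝ → ℝ} {x : ℝ}

lemma hda_k (hs : HasDerivAt s (r x) x) (hw : HasDerivAt w (p x * s x / w x) x)
    (hwne : w x ≠ 0) :
    HasDerivAt (fun y => s y / w y ^ 3)
      ((r x * w x ^ 2 - 3 * (p x * s x ^ 2)) / w x ^ 5) x := by
  have h := hs.div (hw.pow 3) (pow_ne_zero 3 hwne)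
  refine h.congr_deriv ?_
  simp only [Pi.pow_apply, Pi.mul_apply, Pi.sub_apply, Pi.add_apply]
  field_simp
  ring

lemma hda_K1 (hp : HasDerivAt p (s x) x) (hs : HasDerivAt s (r x) x)
    (hr : HasDerivAt r (q x) x) (hw : HasDerivAt w (p x * s x / w x) x)
    (hwne : w x ≠ 0) :
    HasDerivAt (fun y => (r y * w y ^ 2 - 3 * (p y * s y ^ 2)) / w y ^ 5)
      ((q x * w x ^ 4 - 9 * p x * s x * r x * w x ^ 2 - 3 * s x ^ 3 * w x ^ 2
        + 15 * p x ^ 2 * s x ^ 3) / w x ^ 7) x := by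
  have h := ((hr.mul (hw.pow 2)).sub ((hp.mul (hs.pow 2)).const_mul 3)).div
      (hw.pow 5) (pow_ne_zero 5 hwne)
  refine h.congr_deriv ?_
  simp only [Pi.pow_apply, Pi.mul_apply, Pi.sub_apply, Pi.add_apply]
  field_simp
  ring

lemma hda_g (hp : HasDerivAt p (s x) x) (hs : HasDerivAt s (r x) x)
    (hr : HasDerivAt r (q x) x) (hw : HasDerivAt w (p x * s x / w x) x)
    (hwne : w x ≠ 0) :
    HasDerivAt (fun y => ((r y * w y ^ 2 - 3 * (p y * s y ^ 2)) / w y ^ 5) / w y)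
      ((q x * w x ^ 4 - 10 * p x * s x * r x * w x ^ 2 - 3 * s x ^ 3 * w x ^ 2
        + 18 * p x ^ 2 * s x ^ 3) / w x ^ 8) x := by
  have h := (hda_K1 hp hs hr hw hwne).div hw hwne
  refine h.congr_deriv ?_
  field_simp
  ring

lemma hda_A (hs : HasDerivAt s (r x) x)
    (hw : HasDerivAt w (p x * s x / w x) x) (hwne : w x ≠ 0) :
    HasDerivAt (fun y => 2 * s y / w y ^ 5)
      ((2 * r x * w x ^ 2 - 10 * (p x * s x ^ 2)) / w x ^ 7) x := by
  have h := (hs.const_mul 2).div (hw.pow 5) (pow_ne_zero 5 hwne)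
  refine h.congr_deriv ?_
  simp only [Pi.pow_apply, Pi.mul_apply, Pi.sub_apply, Pi.add_apply]
  field_simp
  ring

lemma hda_A1 (hp : HasDerivAt p (s x) x) (hs : HasDerivAt s (r x) x)
    (hr : HasDerivAt r (q x) x) (hw : HasDerivAt w (p x * s x / w x) x)
    (hwne : w x ≠ 0) :
    HasDerivAt (fun y => (2 * r y * w y ^ 2 - 10 * (p y * s y ^ 2)) / w y ^ 7)
      ((2 * q x * w x ^ 4 - 30 * p x * s x * r x * w x ^ 2 - 10 * s x ^ 3 * w x ^ 2
        + 70 * p x ^ 2 * s x ^ 3) / w x ^ 9) x := by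
  have h := (((hr.const_mul 2).mul (hw.pow 2)).sub ((hp.mul (hs.pow 2)).const_mul 10)).div
      (hw.pow 7) (pow_ne_zero 7 hwne)
  refine h.congr_deriv ?_
  simp only [Pi.pow_apply, Pi.mul_apply, Pi.sub_apply, Pi.add_apply]
  field_simp
  ring

lemma hda_B (hp : HasDerivAt p (s x) x) (hs : HasDerivAt s (r x) x)
    (hw : HasDerivAt w (p x * s x / w x) x) (hwne : w x ≠ 0) :
    HasDerivAt (fun y => 5 * s y ^ 2 * p y / w y ^ 7)
      (((10 * p x * s x * r x + 5 * s x ^ 3) * w x ^ 2 - 35 * p x ^ 2 * s x ^ 3) / w x ^ 9) x := by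
  have h := (((hs.pow 2).const_mul 5).mul hp).div (hw.pow 7) (pow_ne_zero 7 hwne)
  refine h.congr_deriv ?_
  simp only [Pi.pow_apply, Pi.mul_apply, Pi.sub_apply, Pi.add_apply]
  field_simp
  ring

end hda

/-- `√(1+u'²)`. -/
noncomputable def sqw (u : ℝ → ℝ) (x : ℝ) : ℝ := Real.sqrt (1 + deriv u x ^ 2)

lemma sqw_def (u : ℝ → ℝ) (x : ℝ) : sqw u x = Real.sqrt (1 + deriv u x ^ 2) := rfl

lemma sqw_pos (u : ℝ → ℝ) (x : ℝ) : 0 < sqw u x := Real.sqrt_pos.mpr (by positivity)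

lemma sqw_ne (u : ℝ → ℝ) (x : ℝ) : sqw u x ≠ 0 := (sqw_pos u x).ne'

lemma sqw_sq (u : ℝ → ℝ) (x : ℝ) : sqw u x ^ 2 = 1 + deriv u x ^ 2 :=
  Real.sq_sqrt (by positivity)

lemma hasDerivAt_sqw (u : ℝ → ℝ) (x : ℝ)
    (hp : HasDerivAt (deriv u) (deriv (deriv u) x) x) :
    HasDerivAt (sqw u) (deriv u x * deriv (deriv u) x / sqw u x) x := by
  have hins : HasDerivAt (fun y => 1 + deriv u y ^ 2)
      (2 * deriv u x * deriv (deriv u) x) x := by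
    simpa [mul_assoc] using (hp.pow 2).const_add 1
  have h := (Real.hasDerivAt_sqrt (by positivity : (1:ℝ) + deriv u x ^ 2 ≠ 0)).comp x hins
  refine h.congr_deriv ?_
  rw [sqw_def]
  field_simp

noncomputable def Afun (u : ℝ → ℝ) (x : ℝ) : ℝ := 2 * deriv (deriv u) x / sqw u x ^ 5

noncomputable def A1fun (u : ℝ → ℝ) (x : ℝ) : ℝ :=
  (2 * deriv (deriv (deriv u)) x * sqw u x ^ 2
    - 10 * (deriv u x * deriv (deriv u) x ^ 2)) / sqw u x ^ 7

noncomputable def Bfun (u : ℝ → ℝ) (x : ℝ) : ℝ :=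
  5 * deriv (deriv u) x ^ 2 * deriv u x / sqw u x ^ 7

noncomputable def Gv (u : ℝ → ℝ) (x : ℝ) : ℝ :=
  (deriv (deriv (deriv (deriv u))) x * sqw u x ^ 4
    - 10 * deriv u x * deriv (deriv u) x * deriv (deriv (deriv u)) x * sqw u x ^ 2
    - 3 * deriv (deriv u) x ^ 3 * sqw u x ^ 2
    + 18 * deriv u x ^ 2 * deriv (deriv u) x ^ 3) / sqw u x ^ 8

theorem stmt_2 (u φ : ℝ → ℝ) (hu : ContDiff ℝ 4 u) (hφ : ContDiff ℝ (⊤ : ℕ∞) φ)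
    (hsupp : tsupport φ ⊆ Set.Ioo 0 1) :
    (∫ x in (0:ℝ)..1,
        (2 * iteratedDeriv 2 u x * iteratedDeriv 2 φ x / (1 + deriv u x ^ 2) ^ ((5:ℝ)/2)
          - 5 * iteratedDeriv 2 u x ^ 2 * deriv u x * deriv φ x
              / (1 + deriv u x ^ 2) ^ ((7:ℝ)/2)))
    = ∫ x in (0:ℝ)..1,
        2 * ((1 / Real.sqrt (1 + deriv u x ^ 2)) *
              deriv (fun y => deriv (curv u) y / Real.sqrt (1 + deriv u y ^ 2)) x
            + (1/2) * curv u x ^ 3) * φ x := by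
  -- smoothness chain for u
  have h4 : ContDiff ℝ ((3:ℕ)+1) u := by exact_mod_cast hu
  rw [contDiff_succ_iff_deriv] at h4
  have h3 : ContDiff ℝ ((2:ℕ)+1) (deriv u) := by exact_mod_cast h4.2.2
  rw [contDiff_succ_iff_deriv] at h3
  have h2 : ContDiff ℝ ((1:ℕ)+1) (deriv (deriv u)) := by exact_mod_cast h3.2.2
  rw [contDiff_succ_iff_deriv] at h2
  have h1 : ContDiff ℝ ((0:ℕ)+1) (deriv (deriv (deriv u))) := by exact_mod_cast h2.2.2
  rw [contDiff_succ_iff_deriv] at h1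
  have hp : ∀ x : ℝ, HasDerivAt (deriv u) (deriv (deriv u) x) x :=
    fun x => (h3.1 x).hasDerivAt
  have hs : ∀ x : ℝ, HasDerivAt (deriv (deriv u)) (deriv (deriv (deriv u)) x) x :=
    fun x => (h2.1 x).hasDerivAt
  have hr : ∀ x : ℝ, HasDerivAt (deriv (deriv (deriv u))) (deriv (deriv (deriv (deriv u))) x) x :=
    fun x => (h1.1 x).hasDerivAt
  have hPc : Continuous (deriv u) := h3.1.continuous
  have hSc : Continuous (deriv (deriv u)) := h2.1.continuous
  have hRc : Continuous (deriv (deriv (deriv u))) := h1.1.continuous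
  have hQc : Continuous (deriv (deriv (deriv (deriv u)))) := h1.2.2.continuous
  have hWc : Continuous (sqw u) :=
    Real.continuous_sqrt.comp (continuous_const.add (hPc.pow 2))
  have hw : ∀ x : ℝ, HasDerivAt (sqw u) (deriv u x * deriv (deriv u) x / sqw u x) x :=
    fun x => hasDerivAt_sqw u x (hp x)
  -- φ facts
  have hφd : ∀ x : ℝ, HasDerivAt φ (deriv φ x) x :=
    fun x => (hφ.differentiable (by simp) x).hasDerivAt
  have hφ' : ContDiff ℝ ((⊤:ℕ∞) : WithTop ℕ∞) φ := hφ.of_le (by simp)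
  have hφtop : ContDiff ℝ ((⊤:ℕ∞) : WithTop ℕ∞) (deriv φ) := (contDiff_infty_iff_deriv.mp hφ').2
  have hφdd : ∀ x : ℝ, HasDerivAt (deriv φ) (deriv (deriv φ) x) x :=
    fun x => (hφtop.differentiable (by simp) x).hasDerivAt
  have hφc : Continuous φ := hφ.continuous
  have hφdc : Continuous (deriv φ) := hφtop.continuous
  have hφddc : Continuous (deriv (deriv φ)) := (contDiff_infty_iff_deriv.mp hφtop).2.continuous
  have hns0 : (0:ℝ) ∉ tsupport φ := fun h => absurd (hsupp h).1 (lt_irrefl 0)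
  have hns1 : (1:ℝ) ∉ tsupport φ := fun h => absurd (hsupp h).2 (lt_irrefl 1)
  have hφ0 : φ 0 = 0 := image_eq_zero_of_notMem_tsupport hns0
  have hφ1 : φ 1 = 0 := image_eq_zero_of_notMem_tsupport hns1
  have hdφ0 : deriv φ 0 = 0 := by
    by_contra h
    exact hns0 (support_deriv_subset (by simpa [Function.mem_support] using h))
  have hdφ1 : deriv φ 1 = 0 := by
    by_contra h
    exact hns1 (support_deriv_subset (by simpa [Function.mem_support] using h))
  -- curvature in canonical form
  have hcurv : curv u = fun y => deriv (deriv u) y / sqw u y ^ 3 := by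
    funext y
    have e3 : (1 + deriv u y ^ 2) ^ ((3:ℝ)/2) = sqw u y ^ 3 := by
      rw [show ((3:ℝ)/2) = ((3:ℕ):ℝ)/2 by norm_num, pow_half_eq _ (by positivity), sqw_def]
    simp only [curv, e3]
    congr 1
    simp [iteratedDeriv_succ, iteratedDeriv_one]
  have hK : ∀ x : ℝ, HasDerivAt (curv u)
      ((deriv (deriv (deriv u)) x * sqw u x ^ 2
        - 3 * (deriv u x * deriv (deriv u) x ^ 2)) / sqw u x ^ 5) x := by
    intro x
    rw [hcurv]
    exact hda_k (hs x) (hw x) (sqw_ne u x)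
  have hdK : deriv (curv u) = fun x => (deriv (deriv (deriv u)) x * sqw u x ^ 2
      - 3 * (deriv u x * deriv (deriv u) x ^ 2)) / sqw u x ^ 5 :=
    funext fun x => (hK x).deriv
  have hgfun : (fun y => deriv (curv u) y / Real.sqrt (1 + deriv u y ^ 2))
      = fun y => ((deriv (deriv (deriv u)) y * sqw u y ^ 2
          - 3 * (deriv u y * deriv (deriv u) y ^ 2)) / sqw u y ^ 5) / sqw u y := by
    funext y
    rw [hdK, ← sqw_def]
  have hg : ∀ x : ℝ, deriv (fun y => deriv (curv u) y / Real.sqrt (1 + deriv u y ^ 2)) x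
      = Gv u x := by
    intro x
    rw [hgfun]
    exact (hda_g (hp x) (hs x) (hr x) (hw x) (sqw_ne u x)).deriv
  -- canonical integrands
  have hL : ∀ x : ℝ,
      2 * iteratedDeriv 2 u x * iteratedDeriv 2 φ x / (1 + deriv u x ^ 2) ^ ((5:ℝ)/2)
        - 5 * iteratedDeriv 2 u x ^ 2 * deriv u x * deriv φ x
            / (1 + deriv u x ^ 2) ^ ((7:ℝ)/2)
      = Afun u x * deriv (deriv φ) x - Bfun u x * deriv φ x := by
    intro x
    have e5 : (1 + deriv u x ^ 2) ^ ((5:ℝ)/2) = sqw u x ^ 5 := by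
      rw [show ((5:ℝ)/2) = ((5:ℕ):ℝ)/2 by norm_num, pow_half_eq _ (by positivity), sqw_def]
    have e7 : (1 + deriv u x ^ 2) ^ ((7:ℝ)/2) = sqw u x ^ 7 := by
      rw [show ((7:ℝ)/2) = ((7:ℕ):ℝ)/2 by norm_num, pow_half_eq _ (by positivity), sqw_def]
    have e2u : iteratedDeriv 2 u x = deriv (deriv u) x := by
      simp [iteratedDeriv_succ, iteratedDeriv_one]
    have e2φ : iteratedDeriv 2 φ x = deriv (deriv φ) x := by
      simp [iteratedDeriv_succ, iteratedDeriv_one]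
    rw [e5, e7, e2u, e2φ]
    simp only [Afun, Bfun]
    ring
  have hR : ∀ x : ℝ,
      2 * ((1 / Real.sqrt (1 + deriv u x ^ 2)) *
            deriv (fun y => deriv (curv u) y / Real.sqrt (1 + deriv u y ^ 2)) x
          + (1/2) * curv u x ^ 3) * φ x
      = 2 * ((1 / sqw u x) * Gv u x
          + (1/2) * (deriv (deriv u) x / sqw u x ^ 3) ^ 3) * φ x := by
    intro x
    rw [hg x, hcurv, ← sqw_def]
  -- the antiderivative
  have hD : ∀ x : ℝ, HasDerivAt
      (fun y => Afun u y * deriv φ y - (A1fun u y + Bfun u y) * φ y)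
      ((Afun u x * deriv (deriv φ) x - Bfun u x * deriv φ x)
        - 2 * ((1 / sqw u x) * Gv u x
            + (1/2) * (deriv (deriv u) x / sqw u x ^ 3) ^ 3) * φ x) x := by
    intro x
    have hA := hda_A (p := deriv u) (hs x) (hw x) (sqw_ne u x)
    have hA1 := hda_A1 (hp x) (hs x) (hr x) (hw x) (sqw_ne u x)
    have hB := hda_B (hp x) (hs x) (hw x) (sqw_ne u x)
    have hcomb := (hA.mul (hφdd x)).sub ((hA1.add hB).mul (hφd x))
    refine hcomb.congr_deriv ?_
    have hkey := key_alg (deriv u x) (deriv (deriv u) x) (deriv (deriv (deriv u)) x)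
      (deriv (deriv (deriv (deriv u))) x) (sqw u x) (sqw_sq u x) (sqw_ne u x)
    simp only [Afun, A1fun, Bfun, Gv, Pi.add_apply] at *
    linear_combination (-φ x) * hkey
  -- continuity of canonical integrands
  have hwne' : ∀ x : ℝ, sqw u x ^ 5 ≠ 0 := fun x => pow_ne_zero _ (sqw_ne u x)
  have hAc : Continuous (Afun u) :=
    (continuous_const.mul hSc).div (hWc.pow 5) fun x => pow_ne_zero _ (sqw_ne u x)
  have hA1c : Continuous (A1fun u) :=
    (((continuous_const.mul hRc).mul (hWc.pow 2)).sub
      (continuous_const.mul (hPc.mul (hSc.pow 2)))).div (hWc.pow 7)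
      fun x => pow_ne_zero _ (sqw_ne u x)
  have hBc : Continuous (Bfun u) :=
    ((continuous_const.mul (hSc.pow 2)).mul hPc).div (hWc.pow 7)
      fun x => pow_ne_zero _ (sqw_ne u x)
  have hGc : Continuous (Gv u) :=
    ((((hQc.mul (hWc.pow 4)).sub
        ((((continuous_const.mul hPc).mul hSc).mul hRc).mul (hWc.pow 2))).sub
      ((continuous_const.mul (hSc.pow 3)).mul (hWc.pow 2))).add
        ((continuous_const.mul (hPc.pow 2)).mul (hSc.pow 3))).div (hWc.pow 8)
      fun x => pow_ne_zero _ (sqw_ne u x)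
  have hLcont : Continuous (fun x => Afun u x * deriv (deriv φ) x - Bfun u x * deriv φ x) :=
    (hAc.mul hφddc).sub (hBc.mul hφdc)
  have hRcont : Continuous (fun x => 2 * ((1 / sqw u x) * Gv u x
      + (1/2) * (deriv (deriv u) x / sqw u x ^ 3) ^ 3) * φ x) := by
    apply Continuous.mul _ hφc
    apply continuous_const.mul
    apply Continuous.add
    · exact (continuous_const.div hWc (sqw_ne u)).mul hGc
    · exact continuous_const.mul ((hSc.div (hWc.pow 3)
        fun x => pow_ne_zero _ (sqw_ne u x)).pow 3)
  -- FTC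
  have hFTC := intervalIntegral.integral_eq_sub_of_hasDerivAt
    (f := fun y => Afun u y * deriv φ y - (A1fun u y + Bfun u y) * φ y)
    (a := 0) (b := 1)
    (fun x _ => hD x) ((hLcont.sub hRcont).intervalIntegrable 0 1)
  have hend : (Afun u 1 * deriv φ 1 - (A1fun u 1 + Bfun u 1) * φ 1)
      - (Afun u 0 * deriv φ 0 - (A1fun u 0 + Bfun u 0) * φ 0) = 0 := by
    rw [hφ0, hφ1, hdφ0, hdφ1]; ring
  rw [hend] at hFTC
  have hsubint := intervalIntegral.integral_sub
    (hLcont.intervalIntegrable (μ := volume) 0 1) (hRcont.intervalIntegrable (μ := volume) 0 1)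
  rw [intervalIntegral.integral_congr (g := fun x =>
      Afun u x * deriv (deriv φ) x - Bfun u x * deriv φ x) (fun x _ => hL x),
    intervalIntegral.integral_congr (g := fun x => 2 * ((1 / sqw u x) * Gv u x
      + (1/2) * (deriv (deriv u) x / sqw u x ^ 3) ^ 3) * φ x) (fun x _ => hR x)]
  have := hFTC.symm.trans hsubint
  linarith [this]
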